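/- Let u : ℝ → ℝ be four times differentiable on an open interval J with u'(x) ≠ 0 and u''(x) ≠ 0 for all x ∈ J, and let g : ℝ → ℝ be four times differentiable on the image u(J) with g(u(x)) = x for all x ∈ J. Then for every x ∈ J one has g''(u(x)) ≠ 0, and the equation u⁗(x) = u'''(x)²/u''(x) + 4·u''(x)·u'''(x)/u'(x) − 6·u''(x)³/u'(x)² holds if and only if g⁗(u(x)) = g'''(u(x))²/g''(u(x)). -/

import Mathlib

/-!
Differentiating `g (u x) = x` on the open interval gives, one order at a time, the derivatives
of an inverse function in division-free form:
`g'(u) u' = 1`, `g''(u) u'³ = -u''`, `g'''(u) u'⁵ = 3u''² - u'u'''` and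
`g⁗(u) u'⁷ = 10u'u''u''' - 15u''³ - u'²u⁗`; each follows by differentiating the previous
identity on the interval and eliminating the lower derivative of `g` with it. Substituting
these, both fourth-order equations become `u'²u''u⁗ - u'²u'''² - 4u'u''²u''' + 6u''⁴ = 0`.
-/

open Set

theorem HasDerivAt.eq_zero_of_forall_mem_eq {𝕜 F : Type*} [NontriviallyNormedField 𝕜]
    [NormedAddCommGroup F] [NormedSpace 𝕜 F] {f : 𝕜 → F} {f' c : F} {s : Set 𝕜} {x : 𝕜}
    (h : HasDerivAt f f' x) (hs : IsOpen s) (hx : x ∈ s) (hf : ∀ y ∈ s, f y = c) : f' = 0 :=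
  h.unique <| (hasDerivAt_const x c).congr_of_eventuallyEq <|
    EqOn.eventuallyEq_of_mem hf (hs.mem_nhds hx)

section

variable {𝕜 : Type*} [NontriviallyNormedField 𝕜]

theorem hasDerivAt_iterate_deriv {f : 𝕜 → 𝕜} {x : 𝕜} (k : ℕ)
    (hf : DifferentiableAt 𝕜 (deriv^[k] f) x) :
    HasDerivAt (deriv^[k] f) (deriv^[k + 1] f x) x := by
  rw [Function.iterate_succ_apply']
  exact hf.hasDerivAt

theorem hasDerivAt_iterate_deriv_comp {g u : 𝕜 → 𝕜} {x : 𝕜} (k : ℕ)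
    (hg : DifferentiableAt 𝕜 (deriv^[k] g) (u x)) (hu : DifferentiableAt 𝕜 u x) :
    HasDerivAt (fun w => deriv^[k] g (u w)) (deriv^[k + 1] g (u x) * deriv u x) x :=
  (hasDerivAt_iterate_deriv k hg).comp x hu.hasDerivAt

namespace Set.LeftInvOn

variable {u g : 𝕜 → 𝕜} {J : Set 𝕜}

theorem deriv_comp_mul_deriv (hgu : LeftInvOn g u J) (hJ : IsOpen J)
    (hu : ∀ x ∈ J, DifferentiableAt 𝕜 u x) (hg : ∀ x ∈ J, DifferentiableAt 𝕜 g (u x)) :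
    ∀ x ∈ J, deriv g (u x) * deriv u x = 1 := by
  intro x hx
  have hid : HasDerivAt (fun w => g (u w)) 1 x :=
    (hasDerivAt_id x).congr_of_eventuallyEq <|
      EqOn.eventuallyEq_of_mem (fun y hy => hgu hy) (hJ.mem_nhds hx)
  exact (hasDerivAt_iterate_deriv_comp 0 (hg x hx) (hu x hx)).unique hid

theorem iterate_deriv_two_comp (hgu : LeftInvOn g u J) (hJ : IsOpen J)
    (hu : ∀ k < 2, ∀ x ∈ J, DifferentiableAt 𝕜 (deriv^[k] u) x)
    (hg : ∀ k < 2, ∀ x ∈ J, DifferentiableAt 𝕜 (deriv^[k] g) (u x)) :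
    ∀ x ∈ J, deriv^[2] g (u x) * deriv u x ^ 3 = -deriv^[2] u x := by
  have h1 := hgu.deriv_comp_mul_deriv hJ (hu 0 (by norm_num)) (hg 0 (by norm_num))
  intro x hx
  have hd := (hasDerivAt_iterate_deriv_comp 1 (hg 1 (by norm_num) x hx)
    (hu 0 (by norm_num) x hx)).mul (hasDerivAt_iterate_deriv 1 (hu 1 (by norm_num) x hx))
  have h2 := hd.eq_zero_of_forall_mem_eq hJ hx h1
  simp only [Nat.reduceAdd, Function.iterate_one] at h2
  linear_combination deriv u x * h2 - deriv^[2] u x * h1 x hx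

theorem iterate_deriv_three_comp (hgu : LeftInvOn g u J) (hJ : IsOpen J)
    (hu : ∀ k < 3, ∀ x ∈ J, DifferentiableAt 𝕜 (deriv^[k] u) x)
    (hg : ∀ k < 3, ∀ x ∈ J, DifferentiableAt 𝕜 (deriv^[k] g) (u x)) :
    ∀ x ∈ J, deriv^[3] g (u x) * deriv u x ^ 5 =
      3 * deriv^[2] u x ^ 2 - deriv u x * deriv^[3] u x := by
  have h2 := hgu.iterate_deriv_two_comp hJ (fun k hk => hu k (by omega))
    (fun k hk => hg k (by omega))
  intro x hx
  have hd := ((hasDerivAt_iterate_deriv_comp 2 (hg 2 (by norm_num) x hx)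
    (hu 0 (by norm_num) x hx)).mul
      ((hasDerivAt_iterate_deriv 1 (hu 1 (by norm_num) x hx)).pow 3)).add
    (hasDerivAt_iterate_deriv 2 (hu 2 (by norm_num) x hx))
  have h3 := hd.eq_zero_of_forall_mem_eq (c := 0) hJ hx fun y hy => by
    simp only [Pi.add_apply, Pi.mul_apply, Pi.pow_apply, Function.iterate_one]
    linear_combination h2 y hy
  simp only [Nat.reduceAdd, Nat.reduceSub, Nat.cast_ofNat, Pi.pow_apply,
    Function.iterate_one] at h3
  linear_combination deriv u x * h3 - 3 * deriv^[2] u x * h2 x hx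

theorem iterate_deriv_four_comp (hgu : LeftInvOn g u J) (hJ : IsOpen J)
    (hu : ∀ k < 4, ∀ x ∈ J, DifferentiableAt 𝕜 (deriv^[k] u) x)
    (hg : ∀ k < 4, ∀ x ∈ J, DifferentiableAt 𝕜 (deriv^[k] g) (u x)) :
    ∀ x ∈ J, deriv^[4] g (u x) * deriv u x ^ 7 =
      10 * deriv u x * deriv^[2] u x * deriv^[3] u x - 15 * deriv^[2] u x ^ 3
        - deriv u x ^ 2 * deriv^[4] u x := by
  have h3 := hgu.iterate_deriv_three_comp hJ (fun k hk => hu k (by omega))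
    (fun k hk => hg k (by omega))
  intro x hx
  have hd := (((hasDerivAt_iterate_deriv_comp 3 (hg 3 (by norm_num) x hx)
    (hu 0 (by norm_num) x hx)).mul
      ((hasDerivAt_iterate_deriv 1 (hu 1 (by norm_num) x hx)).pow 5)).sub
    (((hasDerivAt_iterate_deriv 2 (hu 2 (by norm_num) x hx)).pow 2).const_mul 3)).add
    ((hasDerivAt_iterate_deriv 1 (hu 1 (by norm_num) x hx)).mul
      (hasDerivAt_iterate_deriv 3 (hu 3 (by norm_num) x hx)))
  have h4 := hd.eq_zero_of_forall_mem_eq (c := 0) hJ hx fun y hy => by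
    simp only [Pi.add_apply, Pi.sub_apply, Pi.mul_apply, Pi.pow_apply, Function.iterate_one]
    linear_combination h3 y hy
  simp only [Nat.reduceAdd, Nat.reduceSub, Nat.cast_ofNat, Pi.pow_apply,
    Function.iterate_one] at h4
  linear_combination deriv u x * h4 - 5 * deriv^[2] u x * h3 x hx

end Set.LeftInvOn

end

theorem ne_zero_and_iff_of_inverse_derivs {K : Type*} [Field K] {a₁ a₂ a₃ a₄ b₂ b₃ b₄ : K}
    (ha₁ : a₁ ≠ 0) (ha₂ : a₂ ≠ 0) (hb₂ : b₂ * a₁ ^ 3 = -a₂)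
    (hb₃ : b₃ * a₁ ^ 5 = 3 * a₂ ^ 2 - a₁ * a₃)
    (hb₄ : b₄ * a₁ ^ 7 = 10 * a₁ * a₂ * a₃ - 15 * a₂ ^ 3 - a₁ ^ 2 * a₄) :
    b₂ ≠ 0 ∧ (a₄ = a₃ ^ 2 / a₂ + 4 * a₂ * a₃ / a₁ - 6 * a₂ ^ 3 / a₁ ^ 2 ↔ b₄ = b₃ ^ 2 / b₂) := by
  have hb₂0 : b₂ ≠ 0 := by
    rintro rfl
    exact ha₂ (by linear_combination hb₂)
  refine ⟨hb₂0, ?_⟩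
  rw [eq_div_iff hb₂0, ← mul_left_inj' (a := b₄ * b₂) (pow_ne_zero 10 ha₁),
    show b₄ * b₂ * a₁ ^ 10 = b₄ * a₁ ^ 7 * (b₂ * a₁ ^ 3) by ring,
    show b₃ ^ 2 * a₁ ^ 10 = (b₃ * a₁ ^ 5) ^ 2 by ring, hb₂, hb₃, hb₄]
  field_simp
  constructor <;> intro h <;> linear_combination h

/-- the hodograph transformation `x̄ = u, ū = x` relates the ODE
`u⁗ = u'''²/u'' + 4u''u'''/u' − 6u''³/u'²` to the canonical form `ū⁗ = ū'''²/ū''`. -/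
theorem stmt_10 (u g : ℝ → ℝ) (J : Set ℝ)
    (hJ : ∃ a b : ℝ, J = Set.Ioo a b)
    (hdu1 : ∀ x ∈ J, DifferentiableAt ℝ u x)
    (hdu2 : ∀ x ∈ J, DifferentiableAt ℝ (deriv u) x)
    (hdu3 : ∀ x ∈ J, DifferentiableAt ℝ (deriv^[2] u) x)
    (hdu4 : ∀ x ∈ J, DifferentiableAt ℝ (deriv^[3] u) x)
    (hu1 : ∀ x ∈ J, deriv u x ≠ 0)
    (hu2 : ∀ x ∈ J, deriv^[2] u x ≠ 0)
    (hdg1 : ∀ y ∈ u '' J, DifferentiableAt ℝ g y)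
    (hdg2 : ∀ y ∈ u '' J, DifferentiableAt ℝ (deriv g) y)
    (hdg3 : ∀ y ∈ u '' J, DifferentiableAt ℝ (deriv^[2] g) y)
    (hdg4 : ∀ y ∈ u '' J, DifferentiableAt ℝ (deriv^[3] g) y)
    (hgu : ∀ x ∈ J, g (u x) = x) :
    ∀ x ∈ J, deriv^[2] g (u x) ≠ 0 ∧
      ((deriv^[4] u x =
          (deriv^[3] u x) ^ 2 / deriv^[2] u x
            + 4 * deriv^[2] u x * deriv^[3] u x / deriv u x
            - 6 * (deriv^[2] u x) ^ 3 / (deriv u x) ^ 2) ↔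
        deriv^[4] g (u x) = (deriv^[3] g (u x)) ^ 2 / deriv^[2] g (u x)) := by
  have hJo : IsOpen J := by
    obtain ⟨a, b, rfl⟩ := hJ
    exact isOpen_Ioo
  have hinv : LeftInvOn g u J := fun x hx => hgu x hx
  have hu : ∀ k < 4, ∀ x ∈ J, DifferentiableAt ℝ (deriv^[k] u) x := by
    intro k hk
    interval_cases k <;> assumption
  have hg : ∀ k < 4, ∀ x ∈ J, DifferentiableAt ℝ (deriv^[k] g) (u x) := by
    intro k hk x hx
    have hux := mem_image_of_mem u hx
    interval_cases k
    exacts [hdg1 _ hux, hdg2 _ hux, hdg3 _ hux, hdg4 _ hux]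
  have h2 := hinv.iterate_deriv_two_comp hJo (fun k hk => hu k (by omega))
    (fun k hk => hg k (by omega))
  have h3 := hinv.iterate_deriv_three_comp hJo (fun k hk => hu k (by omega))
    (fun k hk => hg k (by omega))
  have h4 := hinv.iterate_deriv_four_comp hJo hu hg
  intro x hx
  exact ne_zero_and_iff_of_inverse_derivs (hu1 x hx) (hu2 x hx) (h2 x hx) (h3 x hx) (h4 x hx)
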